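/- arXiv:2201.13387 — 2 statements merged into one kernel-verified Lean document; each statement's English description precedes it below -/
import Mathlib

section
/- Suppose each f_i is convex and L_i-smooth and x* is a global minimizer of F (so ∇F(x*) = 0). Then for all x, w ∈ ℝ^d and every ρ ∈ (0,1], ρ·D(x) + (1 − ρ)·D(w) ≤ 2ρ(F(x) − F(x*)) + (1 − ρ)·D(w); in particular D(x) ≤ 2(F(x) − F(x*)), where D(w) = (1/n)∑_{i=1}^n (1/L_i)‖∇f_i(w) − ∇f_i(x*)‖². -/
open MeasureTheory Finset
open scoped RealInnerProductSpace BigOperators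

abbrev Euc (d : ℕ) := EuclideanSpace ℝ (Fin d)

/-- The finite-sum objective `F(x) = (1/n) ∑ f i x`. -/
noncomputable def avgF {d : ℕ} (n : ℕ) (f : Fin n → Euc d → ℝ) (x : Euc d) : ℝ :=
  (1 / (n : ℝ)) * ∑ i, f i x

/-- The gradient of the finite-sum objective, `∇F(x) = (1/n) ∑ ∇f i x`. -/
noncomputable def avgG {d : ℕ} (n : ℕ) (f' : Fin n → Euc d → Euc d) (x : Euc d) : Euc d :=
  (1 / (n : ℝ)) • ∑ i, f' i x

/-- The effective sampling variance `V_e(q; x, w)`. -/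
noncomputable def Ve {d : ℕ} (n : ℕ) (f' : Fin n → Euc d → Euc d)
    (q : Fin n → ℝ) (x w : Euc d) : ℝ :=
  (1 / (n : ℝ) ^ 2) * ∑ i, (1 / q i) * ‖f' i x - f' i w‖ ^ 2

/-- The average smoothness constant `L̄ = (1/n) ∑ L i`. -/
noncomputable def Lbar (n : ℕ) (L : Fin n → ℝ) : ℝ := (1 / (n : ℝ)) * ∑ i, L i

/-- The importance sampling distribution `p^IS_i = L i / (n L̄)`. -/
noncomputable def pIS (n : ℕ) (L : Fin n → ℝ) (i : Fin n) : ℝ :=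
  L i / ((n : ℝ) * Lbar n L)

/-- `D(w) = (1/n) ∑ (1 / L i) ‖∇f i w - ∇f i x*‖²`. -/
noncomputable def Dfun {d : ℕ} (n : ℕ) (f' : Fin n → Euc d → Euc d) (L : Fin n → ℝ)
    (xstar w : Euc d) : ℝ :=
  (1 / (n : ℝ)) * ∑ i, (1 / L i) * ‖f' i w - f' i xstar‖ ^ 2

/-!
Each `f i` satisfies the co-coercivity bound
`(1 / L i) ‖∇f i x - ∇f i x*‖² ≤ 2 (f i x - f i x* - ⟪∇f i x*, x - x*⟫)`, obtained by comparing
the convexity lower bound with the descent-lemma upper bound at the gradient step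
`x - (1 / L i) (∇f i x - ∇f i x*)`. Averaging over `i`, the linear terms add up to
`⟪∇F x*, x - x*⟫ = 0`, so `D x ≤ 2 (F x - F x*)`; multiplying by `ρ ≥ 0` gives the weighted form.
-/

section Smooth

variable {E : Type*} [NormedAddCommGroup E] [InnerProductSpace ℝ E] [CompleteSpace E]
  {f : E → ℝ} {g : E → E} {L : ℝ}

theorem IsLocalMin.hasGradientAt_eq_zero {a g₀ : E} (h : IsLocalMin f a)
    (hf : HasGradientAt f g₀ a) : g₀ = 0 := by
  rw [hasGradientAt_iff_hasFDerivAt] at hf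
  simpa using h.hasFDerivAt_eq_zero hf

theorem le_add_inner_add_sq_of_lipschitz_gradient (hgrad : ∀ x, HasGradientAt f (g x) x)
    (hsm : ∀ x y, ‖g x - g y‖ ≤ L * ‖x - y‖) (x y : E) :
    f y ≤ f x + ⟪g x, y - x⟫ + L / 2 * ‖y - x‖ ^ 2 := by
  set v := y - x
  have hφ : ∀ t : ℝ, HasDerivAt (fun t : ℝ => f (x + t • v)) ⟪g (x + t • v), v⟫ t := by
    intro t
    have hline : HasDerivAt (fun t : ℝ => x + t • v) v t := by
      simpa using ((hasDerivAt_id t).smul_const v).const_add x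
    have := (hgrad (x + t • v)).hasFDerivAt.comp_hasDerivAt t hline
    simp only [InnerProductSpace.toDual_apply_apply] at this
    exact this
  have hB : ∀ t : ℝ, HasDerivAt (fun t : ℝ => f x + t * ⟪g x, v⟫ + L / 2 * t ^ 2 * ‖v‖ ^ 2)
      (⟪g x, v⟫ + L * t * ‖v‖ ^ 2) t := by
    intro t
    refine HasDerivAt.congr_deriv ((((hasDerivAt_id t).mul_const ⟪g x, v⟫).const_add (f x)).fun_add
      (((hasDerivAt_pow 2 t).const_mul (L / 2)).mul_const (‖v‖ ^ 2))) ?_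
    simp only [one_mul, Nat.cast_ofNat]
    ring
  have hslope : ∀ t ∈ Set.Ico (0 : ℝ) 1, ⟪g (x + t • v), v⟫ ≤ ⟪g x, v⟫ + L * t * ‖v‖ ^ 2 := by
    rintro t ⟨ht0, -⟩
    have := hsm (x + t • v) x
    rw [add_sub_cancel_left, norm_smul, Real.norm_of_nonneg ht0] at this
    calc ⟪g (x + t • v), v⟫ = ⟪g x, v⟫ + ⟪g (x + t • v) - g x, v⟫ := by
          rw [inner_sub_left]; ring
      _ ≤ ⟪g x, v⟫ + ‖g (x + t • v) - g x‖ * ‖v‖ := by gcongr; exact real_inner_le_norm _ _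
      _ ≤ ⟪g x, v⟫ + L * (t * ‖v‖) * ‖v‖ := by gcongr
      _ = ⟪g x, v⟫ + L * t * ‖v‖ ^ 2 := by ring
  -- `t ↦ f (x + t • v)` stays below its quadratic majorant on `[0, 1]`: equal at `0`, slower growth.
  have hcompare := image_le_of_deriv_right_le_deriv_boundary
    (fun t _ => (hφ t).continuousAt.continuousWithinAt) (fun t _ => (hφ t).hasDerivWithinAt)
    (by simp) (fun t _ => (hB t).continuousAt.continuousWithinAt)
    (fun t _ => (hB t).hasDerivWithinAt) hslope (Set.right_mem_Icc.mpr zero_le_one)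
  simpa [v] using hcompare

theorem one_div_mul_norm_sub_sq_le_of_lipschitz_gradient (hL : 0 < L)
    (hgrad : ∀ x, HasGradientAt f (g x) x) (hconv : ∀ x y, f x + ⟪g x, y - x⟫ ≤ f y)
    (hsm : ∀ x y, ‖g x - g y‖ ≤ L * ‖x - y‖) (x y : E) :
    1 / L * ‖g x - g y‖ ^ 2 ≤ 2 * (f x - f y - ⟪g y, x - y⟫) := by
  set Δ := g x - g y
  set z := x - L⁻¹ • Δ
  have hlow := hconv y z
  have hup := le_add_inner_add_sq_of_lipschitz_gradient hgrad hsm x z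
  have hzx : z - x = -(L⁻¹ • Δ) := by simp [z]
  have hzy : z - y = (x - y) - L⁻¹ • Δ := by simp only [z]; abel
  have hΔ : ⟪g x, Δ⟫ - ⟪g y, Δ⟫ = ‖Δ‖ ^ 2 := by
    rw [← inner_sub_left, real_inner_self_eq_norm_sq]
  rw [hzx, norm_neg, norm_smul, Real.norm_of_nonneg (inv_nonneg.mpr hL.le), inner_neg_right,
    real_inner_smul_right] at hup
  rw [hzy, inner_sub_right, real_inner_smul_right] at hlow
  have hgap : L⁻¹ * ⟪g x, Δ⟫ - L⁻¹ * ⟪g y, Δ⟫ = L⁻¹ * ‖Δ‖ ^ 2 := by rw [← mul_sub, hΔ]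
  have hquad : L / 2 * (L⁻¹ * ‖Δ‖) ^ 2 = L⁻¹ / 2 * ‖Δ‖ ^ 2 := by field_simp
  rw [one_div]
  linarith

end Smooth

section FiniteSum

variable {d n : ℕ} {f : Fin n → Euc d → ℝ} {f' : Fin n → Euc d → Euc d}

theorem hasGradientAt_avgF {x : Euc d} (hgrad : ∀ i, HasGradientAt (f i) (f' i x) x) :
    HasGradientAt (avgF n f) (avgG n f' x) x := by
  rw [hasGradientAt_iff_hasFDerivAt, avgG, map_smul, map_sum]
  exact (HasFDerivAt.fun_sum (u := univ) fun i _ => (hgrad i).hasFDerivAt).const_mul _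

theorem Dfun_le_two_mul_avgF_sub {L : Fin n → ℝ} (hgrad : ∀ i x, HasGradientAt (f i) (f' i x) x)
    (hconv : ∀ i x y, f i x + ⟪f' i x, y - x⟫ ≤ f i y) (hLpos : ∀ i, 0 < L i)
    (hsmooth : ∀ i x y, ‖f' i x - f' i y‖ ≤ L i * ‖x - y‖)
    {xstar : Euc d} (hmin : ∀ y, avgF n f xstar ≤ avgF n f y) (x : Euc d) :
    Dfun n f' L xstar x ≤ 2 * (avgF n f x - avgF n f xstar) := by
  have hcrit : avgG n f' xstar = 0 :=
    IsLocalMin.hasGradientAt_eq_zero (Filter.Eventually.of_forall hmin)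
      (hasGradientAt_avgF fun i => hgrad i xstar)
  calc Dfun n f' L xstar x
      ≤ 1 / (n : ℝ) * ∑ i, 2 * (f i x - f i xstar - ⟪f' i xstar, x - xstar⟫) := by
        refine mul_le_mul_of_nonneg_left (sum_le_sum fun i _ => ?_) (by positivity)
        exact one_div_mul_norm_sub_sq_le_of_lipschitz_gradient (hLpos i) (hgrad i) (hconv i)
          (hsmooth i) x xstar
    _ = 2 * (avgF n f x - avgF n f xstar) - 2 * ⟪avgG n f' xstar, x - xstar⟫ := by
        simp only [avgF, avgG, real_inner_smul_left, sum_inner, ← mul_sum, sum_sub_distrib]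
        ring
    _ = 2 * (avgF n f x - avgF n f xstar) := by rw [hcrit, inner_zero_left, mul_zero, sub_zero]

end FiniteSum

theorem D_recursion_bound_general (d n : ℕ)
    (f : Fin n → Euc d → ℝ) (f' : Fin n → Euc d → Euc d) (L : Fin n → ℝ)
    (hgrad : ∀ i x, HasGradientAt (f i) (f' i x) x)
    (hconv : ∀ i x y, f i x + ⟪f' i x, y - x⟫ ≤ f i y)
    (hLpos : ∀ i, 0 < L i)
    (hsmooth : ∀ i x y, ‖f' i x - f' i y‖ ≤ L i * ‖x - y‖)
    (xstar : Euc d) (hmin : ∀ y, avgF n f xstar ≤ avgF n f y)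
    (x w : Euc d) (ρ : ℝ) (hρ0 : 0 < ρ) :
    (ρ * Dfun n f' L xstar x + (1 - ρ) * Dfun n f' L xstar w ≤
      2 * ρ * (avgF n f x - avgF n f xstar) + (1 - ρ) * Dfun n f' L xstar w) ∧
    Dfun n f' L xstar x ≤ 2 * (avgF n f x - avgF n f xstar) := by
  have hD := Dfun_le_two_mul_avgF_sub hgrad hconv hLpos hsmooth hmin x
  exact ⟨by linarith [mul_le_mul_of_nonneg_left hD hρ0.le], hD⟩

/-- recursion bound for the weighted distance `D`. -/
theorem D_recursion_bound (d n : ℕ) (hd : 0 < d) (hn : 0 < n)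
    (f : Fin n → Euc d → ℝ) (f' : Fin n → Euc d → Euc d) (L : Fin n → ℝ)
    (hgrad : ∀ i x, HasGradientAt (f i) (f' i x) x)
    (hconv : ∀ i x y, f i x + ⟪f' i x, y - x⟫ ≤ f i y)
    (hLpos : ∀ i, 0 < L i)
    (hsmooth : ∀ i x y, ‖f' i x - f' i y‖ ≤ L i * ‖x - y‖)
    (xstar : Euc d) (hmin : ∀ y, avgF n f xstar ≤ avgF n f y)
    (x w : Euc d) (ρ : ℝ) (hρ0 : 0 < ρ) (hρ1 : ρ ≤ 1) :
    (ρ * Dfun n f' L xstar x + (1 - ρ) * Dfun n f' L xstar w ≤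
      2 * ρ * (avgF n f x - avgF n f xstar) + (1 - ρ) * Dfun n f' L xstar w) ∧
    Dfun n f' L xstar x ≤ 2 * (avgF n f x - avgF n f xstar) :=
  D_recursion_bound_general d n f f' L hgrad hconv hLpos hsmooth xstar hmin x w ρ hρ0
end

section
/- Suppose each f_i is convex and L_i-smooth. Then for all x, w ∈ ℝ^d, (1/n)∑_{i=1}^n (1/L_i)‖∇f_i(x) − ∇f_i(w)‖² ≤ 2(F(w) − F(x) − ⟨∇F(x), w − x⟩). -/
open MeasureTheory Finset
open scoped RealInnerProductSpace BigOperators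

/-! Descent lemma plus the supporting hyperplane of a convex function: comparing `f` at `x` with
`f` one gradient step `w - (1/L)(∇f w - ∇f x)` away from `w` gives the co-coercivity bound
`(1/L)‖∇f x - ∇f w‖² ≤ 2 D_f(x, w)` for each component, with `D_f` the Bregman divergence; the
Bregman divergence of an average is the average of the Bregman divergences. -/

section Bregman

variable {E : Type*} [NormedAddCommGroup E] [InnerProductSpace ℝ E] [CompleteSpace E]

noncomputable def bregman (f : E → ℝ) (g : E → E) (x y : E) : ℝ := f y - f x - ⟪g x, y - x⟫

theorem HasGradientAt.hasDerivAt_comp_add_smul {f : E → ℝ} {g x v : E} {t : ℝ}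
    (hf : HasGradientAt f g (x + t • v)) :
    HasDerivAt (fun s : ℝ => f (x + s • v)) ⟪g, v⟫ t := by
  have hline : HasDerivAt (fun s : ℝ => x + s • v) v t := by
    simpa using ((hasDerivAt_id t).smul_const v).const_add x
  exact hf.hasFDerivAt.comp_hasDerivAt t hline

theorem bregman_le_of_lipschitz {f : E → ℝ} {g : E → E} {L : ℝ}
    (hg : ∀ x, HasGradientAt f (g x) x) (hlip : ∀ a b, ‖g a - g b‖ ≤ L * ‖a - b‖) (x y : E) :
    bregman f g x y ≤ L / 2 * ‖y - x‖ ^ 2 := by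
  set v := y - x
  let φ : ℝ → ℝ := fun t => f (x + t • v) - t * ⟪g x, v⟫ - L / 2 * t ^ 2 * ‖v‖ ^ 2
  have hφ : ∀ t, HasDerivAt φ (⟪g (x + t • v) - g x, v⟫ - L * t * ‖v‖ ^ 2) t := by
    intro t
    have := (((hg (x + t • v)).hasDerivAt_comp_add_smul).sub
      ((hasDerivAt_id t).mul_const ⟪g x, v⟫)).sub
      (((hasDerivAt_pow 2 t).const_mul (L / 2)).mul_const (‖v‖ ^ 2))
    refine this.congr_deriv ?_
    rw [inner_sub_left]
    ring
  have hφ' : ∀ t ∈ interior (Set.Ici (0 : ℝ)), ⟪g (x + t • v) - g x, v⟫ - L * t * ‖v‖ ^ 2 ≤ 0 := by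
    intro t ht
    rw [interior_Ici] at ht
    have := hlip (x + t • v) x
    rw [add_sub_cancel_left, norm_smul, Real.norm_of_nonneg ht.le] at this
    rw [sub_nonpos]
    calc ⟪g (x + t • v) - g x, v⟫ ≤ ‖g (x + t • v) - g x‖ * ‖v‖ := real_inner_le_norm _ _
      _ ≤ L * (t * ‖v‖) * ‖v‖ := by gcongr
      _ = L * t * ‖v‖ ^ 2 := by ring
  have hanti := antitoneOn_of_hasDerivWithinAt_nonpos (convex_Ici 0)
    (fun t _ => (hφ t).continuousAt.continuousWithinAt) (fun t _ => (hφ t).hasDerivWithinAt) hφ'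
  have := hanti Set.self_mem_Ici (show (1:ℝ) ∈ Set.Ici 0 by norm_num) zero_le_one
  simp only [one_smul, add_sub_cancel, one_mul, one_pow, mul_one, zero_smul, add_zero, zero_mul,
    sub_zero, ne_eq, OfNat.ofNat_ne_zero, not_false_eq_true, zero_pow, mul_zero, tsub_le_iff_right,
    φ, v] at this
  unfold bregman
  linarith

theorem one_div_mul_norm_sub_sq_le_two_mul_bregman {f : E → ℝ} {g : E → E} {L : ℝ} (hL : 0 < L)
    (hg : ∀ x, HasGradientAt f (g x) x) (hlip : ∀ a b, ‖g a - g b‖ ≤ L * ‖a - b‖) {x : E}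
    (hconv : ∀ y, f x + ⟪g x, y - x⟫ ≤ f y) (w : E) :
    1 / L * ‖g x - g w‖ ^ 2 ≤ 2 * bregman f g x w := by
  set u := g w - g x
  set y := w - (1 / L) • u
  have hsupport := hconv y
  have hdescent := bregman_le_of_lipschitz hg hlip w y
  have hyw : y - w = -((1 / L) • u) := by simp only [y, sub_sub_cancel_left]
  have hsplit : ⟪g x, y - x⟫ = ⟪g x, w - x⟫ + ⟪g x, y - w⟫ := by
    rw [← inner_add_right, sub_add_sub_cancel']
  have hstep : ⟪g w, y - w⟫ - ⟪g x, y - w⟫ = -(1 / L) * ‖u‖ ^ 2 := by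
    rw [← inner_sub_left, hyw, inner_neg_right, real_inner_smul_right,
      real_inner_self_eq_norm_sq]
    ring
  have hnorm : L / 2 * ‖y - w‖ ^ 2 = 1 / (2 * L) * ‖u‖ ^ 2 := by
    rw [hyw, norm_neg, norm_smul, Real.norm_of_nonneg (by positivity)]
    field_simp
  rw [norm_sub_rev]
  unfold bregman at *
  have : 1 / L * ‖u‖ ^ 2 = 2 * (1 / (2 * L) * ‖u‖ ^ 2) := by field_simp
  linarith

end Bregman

theorem bregman_avgF_avgG {d n : ℕ} (f : Fin n → Euc d → ℝ) (f' : Fin n → Euc d → Euc d)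
    (x w : Euc d) :
    bregman (avgF n f) (avgG n f') x w = 1 / (n : ℝ) * ∑ i, bregman (f i) (f' i) x w := by
  simp only [bregman, avgF, avgG, real_inner_smul_left, sum_inner, sum_sub_distrib]
  ring

theorem averaged_cocoercivity_general (d n : ℕ)
    (f : Fin n → Euc d → ℝ) (f' : Fin n → Euc d → Euc d) (L : Fin n → ℝ)
    (hgrad : ∀ i x, HasGradientAt (f i) (f' i x) x)
    (hconv : ∀ i x y, f i x + ⟪f' i x, y - x⟫ ≤ f i y)
    (hLpos : ∀ i, 0 < L i)
    (hsmooth : ∀ i x y, ‖f' i x - f' i y‖ ≤ L i * ‖x - y‖)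
    (x w : Euc d) :
    (1 / (n : ℝ)) * ∑ i, (1 / L i) * ‖f' i x - f' i w‖ ^ 2 ≤
      2 * (avgF n f w - avgF n f x - ⟪avgG n f' x, w - x⟫) := by
  calc 1 / (n : ℝ) * ∑ i, 1 / L i * ‖f' i x - f' i w‖ ^ 2
      ≤ 1 / (n : ℝ) * ∑ i, 2 * bregman (f i) (f' i) x w := by
        gcongr 1 / (n : ℝ) * ∑ i, ?_ with i
        exact one_div_mul_norm_sub_sq_le_two_mul_bregman (hLpos i) (hgrad i) (hsmooth i)
          (hconv i x) w
    _ = 2 * bregman (avgF n f) (avgG n f') x w := by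
        rw [bregman_avgF_avgG, ← mul_sum]
        ring

/-- co-coercivity averaged over the components. -/
theorem averaged_cocoercivity (d n : ℕ) (hd : 0 < d) (hn : 0 < n)
    (f : Fin n → Euc d → ℝ) (f' : Fin n → Euc d → Euc d) (L : Fin n → ℝ)
    (hgrad : ∀ i x, HasGradientAt (f i) (f' i x) x)
    (hconv : ∀ i x y, f i x + ⟪f' i x, y - x⟫ ≤ f i y)
    (hLpos : ∀ i, 0 < L i)
    (hsmooth : ∀ i x y, ‖f' i x - f' i y‖ ≤ L i * ‖x - y‖)
    (x w : Euc d) :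
    (1 / (n : ℝ)) * ∑ i, (1 / L i) * ‖f' i x - f' i w‖ ^ 2 ≤
      2 * (avgF n f w - avgF n f x - ⟪avgG n f' x, w - x⟫) :=
  averaged_cocoercivity_general d n f f' L hgrad hconv hLpos hsmooth x w
end
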